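/- Varaiya's conjecture is false: on M = ℝ^4, the two Riemannian metrics G^1 = dx_1² + e^{−x_4} dx_2² + e^{−x_1} dx_3² + e^{−x_3} dx_4² and G^2 = dx_1² + e^{−x_4} dx_2² + (e^{−x_1}+e^{x_3}) dx_3² + e^{−x_3}(1+e^{2x_1}) dx_4² − e^{x_1}(dx_3⊗dx_4 + dx_4⊗dx_3) are distinct, yet for the output functions V_1 = x_1 and V_2 = x_2 + x_3 + x_4 one has grad_{G^1} V_1 = grad_{G^2} V_1 = ∂/∂x_1 and grad_{G^1} V_2 = grad_{G^2} V_2 = e^{x_4} ∂/∂x_2 + e^{x_1} ∂/∂x_3 + e^{x_3} ∂/∂x_4. -/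

import Mathlib

open scoped BigOperators
noncomputable section

/-- Points of the coordinate model of an `n`-manifold. -/
abbrev Pt (n : ℕ) : Type := Fin n → ℝ
/-- Vector fields in coordinates. -/
abbrev VF (n : ℕ) : Type := Pt n → Pt n
/-- Christoffel symbols `Γ x a b c = Γ^a_{bc}(x)` of an affine connection. -/
abbrev Chr (n : ℕ) : Type := Pt n → Fin n → Fin n → Fin n → ℝ

/-- Partial derivative `∂f/∂x^b` at `x`. -/
def pd {n : ℕ} (f : Pt n → ℝ) (b : Fin n) (x : Pt n) : ℝ :=
  fderiv ℝ f x (Pi.single b 1)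

/-- Lie derivative of a function along a vector field, `X f`. -/
def dirDer {n : ℕ} (X : VF n) (f : Pt n → ℝ) : Pt n → ℝ :=
  fun x => ∑ b, X x b * pd f b x

/-- Covariant derivative `∇_X Y` of the connection with Christoffel symbols `Γ`. -/
def nabla {n : ℕ} (Γ : Chr n) (X Y : VF n) : VF n :=
  fun x a => (∑ b, X x b * pd (fun y => Y y a) b x) + ∑ b, ∑ c, Γ x a b c * X x b * Y x c

/-- Symmetric product `⟨X : Y⟩ = ∇_X Y + ∇_Y X`. -/
def symProd {n : ℕ} (Γ : Chr n) (X Y : VF n) : VF n :=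
  fun x a => nabla Γ X Y x a + nabla Γ Y X x a

/-- Lie bracket `[X, Y]` in coordinates. -/
def lieBr {n : ℕ} (X Y : VF n) : VF n :=
  fun x a => (∑ b, X x b * pd (fun y => Y y a) b x) - ∑ b, Y x b * pd (fun y => X y a) b x

/-- Smoothness of a vector field (componentwise). -/
def SmoothVF {n : ℕ} (X : VF n) : Prop := ∀ a, ContDiff ℝ (⊤ : ℕ∞) (fun x => X x a)

/-- Torsion-free connection: Christoffel symbols symmetric in the lower indices. -/
def TorsionFree {n : ℕ} (Γ : Chr n) : Prop := ∀ x a b c, Γ x a b c = Γ x a c b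

/-- Smoothness of the Christoffel symbols. -/
def SmoothChr {n : ℕ} (Γ : Chr n) : Prop := ∀ a b c, ContDiff ℝ (⊤ : ℕ∞) (fun x => Γ x a b c)

/-- Gradient of `f` w.r.t. a metric given by its matrix `G`, via the inverse matrix. -/
def gradMetric (G : Pt 4 → Matrix (Fin 4) (Fin 4) ℝ) (f : Pt 4 → ℝ) : VF 4 :=
  fun x => Matrix.mulVec ((G x)⁻¹) (fun b => pd f b x)

/-- The metric `G¹` of Basto Gonçalves' counterexample. -/
def Gone : Pt 4 → Matrix (Fin 4) (Fin 4) ℝ := fun x =>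
  !![1, 0, 0, 0;
     0, Real.exp (-(x 3)), 0, 0;
     0, 0, Real.exp (-(x 0)), 0;
     0, 0, 0, Real.exp (-(x 2))]

/-- The metric `G²` of Basto Gonçalves' counterexample. -/
def Gtwo : Pt 4 → Matrix (Fin 4) (Fin 4) ℝ := fun x =>
  !![1, 0, 0, 0;
     0, Real.exp (-(x 3)), 0, 0;
     0, 0, Real.exp (-(x 0)) + Real.exp (x 2), -(Real.exp (x 0));
     0, 0, -(Real.exp (x 0)), Real.exp (-(x 2)) * (1 + Real.exp (2 * x 0))]

lemma pd_coord {n : ℕ} (i b : Fin n) (x : Pt n) :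
    pd (fun y => y i) b x = if b = i then 1 else 0 := by
  have h := (hasFDerivAt_apply (𝕜 := ℝ) i x).fderiv
  simp [pd, h, Pi.single_apply, eq_comm]

lemma pd_sum (b : Fin 4) (x : Pt 4) :
    pd (fun y : Pt 4 => y 1 + y 2 + y 3) b x =
      (if b = 1 then 1 else 0) + (if b = 2 then 1 else 0) + (if b = 3 then 1 else 0) := by
  have h : fderiv ℝ (fun y : Pt 4 => y 1 + y 2 + y 3) x = _ := (((hasFDerivAt_apply (𝕜 := ℝ) (1 : Fin 4) x).add
    (hasFDerivAt_apply (𝕜 := ℝ) (2 : Fin 4) x)).add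
    (hasFDerivAt_apply (𝕜 := ℝ) (3 : Fin 4) x)).fderiv
  simp [pd, h, Pi.single_apply, eq_comm]

lemma det_Gone (x : Pt 4) : IsUnit (Gone x).det := by
  have : (Gone x).det = Real.exp (-(x 3)) * Real.exp (-(x 0)) * Real.exp (-(x 2)) := by
    simp [Gone, Matrix.det_succ_row_zero, Matrix.det_fin_three, Fin.sum_univ_succ]; ring
  rw [isUnit_iff_ne_zero, this]
  positivity

lemma det_Gtwo (x : Pt 4) : IsUnit (Gtwo x).det := by
  have : (Gtwo x).det = Real.exp (-(x 3)) *
      ((Real.exp (-(x 0)) + Real.exp (x 2)) * (Real.exp (-(x 2)) * (1 + Real.exp (2 * x 0)))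
        - Real.exp (x 0) * Real.exp (x 0)) := by
    simp [Gtwo, Matrix.det_succ_row_zero, Matrix.det_fin_three, Fin.sum_univ_succ]; ring
  rw [isUnit_iff_ne_zero, this]
  have h2 : Real.exp (x 0) * Real.exp (x 0) = Real.exp (x 2) * Real.exp (-(x 2)) * Real.exp (2 * x 0) := by
    rw [← Real.exp_add, ← Real.exp_add, ← Real.exp_add]; ring_nf
  rw [h2]
  have : (Real.exp (-(x 0)) + Real.exp (x 2)) * (Real.exp (-(x 2)) * (1 + Real.exp (2 * x 0)))
        - Real.exp (x 2) * Real.exp (-(x 2)) * Real.exp (2 * x 0)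
      = Real.exp (-(x 0)) * Real.exp (-(x 2)) * (1 + Real.exp (2 * x 0))
        + Real.exp (x 2) * Real.exp (-(x 2)) := by ring
  rw [this]
  positivity

lemma grad_eq (G : Pt 4 → Matrix (Fin 4) (Fin 4) ℝ) (f : Pt 4 → ℝ) (v : VF 4) (x : Pt 4)
    (hdet : IsUnit (G x).det)
    (h : (G x).mulVec (v x) = fun b => pd f b x) :
    gradMetric G f x = v x := by
  rw [gradMetric, ← h, Matrix.mulVec_mulVec, Matrix.nonsing_inv_mul _ hdet, Matrix.one_mulVec]

/-- Varaiya's conjecture is false: the distinct metrics `G¹`, `G²` on `ℝ⁴` give rise to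
the same gradient vector fields for the outputs `V₁ = x₁` and `V₂ = x₂ + x₃ + x₄`. -/
theorem varaiya_counterexample :
    Gone ≠ Gtwo
    ∧ gradMetric Gone (fun x => x 0) = (fun _ => ![1, 0, 0, 0])
    ∧ gradMetric Gtwo (fun x => x 0) = (fun _ => ![1, 0, 0, 0])
    ∧ gradMetric Gone (fun x => x 1 + x 2 + x 3)
        = (fun x => ![0, Real.exp (x 3), Real.exp (x 0), Real.exp (x 2)])
    ∧ gradMetric Gtwo (fun x => x 1 + x 2 + x 3)
        = (fun x => ![0, Real.exp (x 3), Real.exp (x 0), Real.exp (x 2)]) := by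
  refine ⟨?_, ?_, ?_, ?_, ?_⟩
  · intro h
    have h2 := congrFun (congrFun (congrFun h 0) 2) 3
    simp [Gone, Gtwo] at h2
  · funext x
    refine grad_eq _ _ (fun _ => ![1, 0, 0, 0]) x (det_Gone x) ?_
    funext b
    fin_cases b <;>
      simp [Gone, Matrix.mulVec, dotProduct, Fin.sum_univ_four, pd_coord]
  · funext x
    refine grad_eq _ _ (fun _ => ![1, 0, 0, 0]) x (det_Gtwo x) ?_
    funext b
    fin_cases b <;>
      simp [Gtwo, Matrix.mulVec, dotProduct, Fin.sum_univ_four, pd_coord]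
  · funext x
    refine grad_eq _ _ (fun x => ![0, Real.exp (x 3), Real.exp (x 0), Real.exp (x 2)]) x
      (det_Gone x) ?_
    funext b
    fin_cases b <;>
      simp [Gone, Matrix.mulVec, dotProduct, Fin.sum_univ_four, pd_sum,
        ← Real.exp_add]
  · funext x
    refine grad_eq _ _ (fun x => ![0, Real.exp (x 3), Real.exp (x 0), Real.exp (x 2)]) x
      (det_Gtwo x) ?_
    funext b
    fin_cases b <;>
      simp [Gtwo, Matrix.mulVec, dotProduct, Fin.sum_univ_four, pd_sum,
        ← Real.exp_add, add_mul, mul_add] <;> ring_nf
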